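/- Fix α ∈ (0,1), T > 0, and a continuous function θ : [0,T] → ℝ. Define v(t,x) = (x^α/α)·exp( (α/(2(1−α))) ∫_t^T θ(r)² dr ) for t ∈ [0,T] and x > 0. Then v satisfies the Hamilton–Jacobi–Bellman equation ∂v/∂t + sup_{π ∈ ℝ} [ (∂v/∂x)·π·θ(t) + (1/2)·(∂²v/∂x²)·π² ] = 0 on [0,T] × (0,∞), with terminal condition v(T,x) = x^α/α, and the supremum is attained at π̂(t,x) = x·θ(t)/(1−α). -/

import Mathlib

/-!
In `x` the Hamiltonian `v_x π θ + v_xx π² / 2` is a concave quadratic (as `v_xx < 0`), maximised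
where its derivative `v_x θ + v_xx π` vanishes, i.e. at `π̂ = x θ / (1 - α)`. There it equals
`x^α E θ² / (2 (1 - α))`, which is exactly `-∂v/∂t` by the fundamental theorem of calculus
applied to the exponent of `E`.
-/

open Set

theorem ContinuousOn.hasDerivWithinAt_integral_left {f : ℝ → ℝ} {a b t : ℝ}
    (hf : ContinuousOn f (Icc a b)) (ht : t ∈ Icc a b) :
    HasDerivWithinAt (fun u => ∫ r in u..b, f r) (-f t) (Icc a b) t := by
  -- provides the `FTCFilter` instance for `𝓝[Icc a b] t`
  have : Fact (t ∈ Icc a b) := ⟨ht⟩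
  have hint : IntervalIntegrable f MeasureTheory.volume t b :=
    (hf.mono (by rw [uIcc_of_le ht.2]; exact Icc_subset_Icc_left ht.1)).intervalIntegrable
  exact intervalIntegral.integral_hasDerivWithinAt_left hint
    ⟨Icc a b, self_mem_nhdsWithin, hf.aestronglyMeasurable measurableSet_Icc⟩ (hf t ht)

theorem Real.hasDerivAt_rpow_div_self {x p : ℝ} (hp : p ≠ 0) (h : x ≠ 0 ∨ 1 ≤ p) :
    HasDerivAt (fun y => y ^ p / p) (x ^ (p - 1)) x :=
  ((Real.hasDerivAt_rpow_const h).div_const p).congr_deriv (by field_simp)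

theorem Real.rpow_sub_two {x : ℝ} (hx : x ≠ 0) (y : ℝ) : x ^ (y - 2) = x ^ y / x ^ 2 := by
  simpa using Real.rpow_sub_natCast hx y 2

theorem isGreatest_range_mul_add_half_mul_sq {a b c p : ℝ} (hb : b ≤ 0)
    (hp : a * c + b * p = 0) :
    IsGreatest (range fun π => a * π * c + 1 / 2 * b * π ^ 2) (a * p * c + 1 / 2 * b * p ^ 2) := by
  refine ⟨⟨p, rfl⟩, ?_⟩
  rintro _ ⟨π, rfl⟩
  have hgap : a * p * c + 1 / 2 * b * p ^ 2 - (a * π * c + 1 / 2 * b * π ^ 2)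
      = -b / 2 * (π - p) ^ 2 := by
    linear_combination (p - π) * hp
  dsimp only
  nlinarith [mul_nonneg (neg_nonneg.2 hb) (sq_nonneg (π - p))]

theorem stmt_19_general (α T : ℝ) (hα : α ∈ Ioo (0:ℝ) 1)
    (θ : ℝ → ℝ) (hθ : ContinuousOn θ (Icc 0 T))
    (E : ℝ → ℝ)
    (hE : ∀ t, E t = Real.exp (α/(2*(1-α)) * ∫ r in t..T, (θ r)^2))
    (v : ℝ → ℝ → ℝ) (hv : ∀ t x, v t x = x ^ α / α * E t) :
    (∀ x > (0:ℝ), v T x = x ^ α / α) ∧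
    ∀ t ∈ Icc (0:ℝ) T, ∀ x > (0:ℝ),
      HasDerivWithinAt (fun s => v s x)
        (-(x ^ α / α * E t * (α/(2*(1-α))) * (θ t)^2)) (Icc 0 T) t ∧
      HasDerivAt (fun y : ℝ => v t y) (x ^ (α-1) * E t) x ∧
      HasDerivAt (fun y : ℝ => y ^ (α-1) * E t) ((α-1) * x ^ (α-2) * E t) x ∧
      IsGreatest (Set.range fun π : ℝ =>
          (x ^ (α-1) * E t) * π * θ t + 1/2 * ((α-1) * x ^ (α-2) * E t) * π^2)
        ((x ^ (α-1) * E t) * (x * θ t/(1-α)) * θ t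
          + 1/2 * ((α-1) * x ^ (α-2) * E t) * (x * θ t/(1-α))^2) ∧
      -(x ^ α / α * E t * (α/(2*(1-α))) * (θ t)^2)
        + ((x ^ (α-1) * E t) * (x * θ t/(1-α)) * θ t
          + 1/2 * ((α-1) * x ^ (α-2) * E t) * (x * θ t/(1-α))^2) = 0 := by
  obtain ⟨hα0, hα1⟩ := hα
  obtain rfl : v = fun t x => x ^ α / α * E t := funext₂ hv
  obtain rfl : E = fun t => Real.exp (α/(2*(1-α)) * ∫ r in t..T, (θ r)^2) := funext hE
  refine ⟨fun x _ => by simp, fun t ht x hx => ⟨?_, ?_, ?_, ?_, ?_⟩⟩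
  · have hI := (hθ.pow 2).hasDerivWithinAt_integral_left (f := fun r => θ r ^ 2) ht
    exact ((hI.const_mul _).exp.const_mul (x ^ α / α)).congr_deriv (by ring)
  · exact (Real.hasDerivAt_rpow_div_self hα0.ne' (.inl hx.ne')).mul_const _
  · exact ((Real.hasDerivAt_rpow_const (p := α - 1) (.inl hx.ne')).mul_const _).congr_deriv
      (by ring_nf)
  · refine isGreatest_range_mul_add_half_mul_sq ?_ ?_
    · exact mul_nonpos_of_nonpos_of_nonneg
        (mul_nonpos_of_nonpos_of_nonneg (by linarith) (Real.rpow_pos_of_pos hx _).le)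
        (Real.exp_pos _).le
    · rw [Real.rpow_sub_one hx.ne', Real.rpow_sub_two hx.ne']
      field_simp [(by linarith : 1 - α ≠ 0)]
      ring
  · rw [Real.rpow_sub_one hx.ne', Real.rpow_sub_two hx.ne']
    field_simp [(by linarith : 1 - α ≠ 0)]
    ring

theorem stmt_19 (α T : ℝ) (hα : α ∈ Ioo (0:ℝ) 1) (hT : 0 < T)
    (θ : ℝ → ℝ) (hθ : ContinuousOn θ (Icc 0 T))
    (E : ℝ → ℝ)
    (hE : ∀ t, E t = Real.exp (α/(2*(1-α)) * ∫ r in t..T, (θ r)^2))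
    (v : ℝ → ℝ → ℝ) (hv : ∀ t x, v t x = x ^ α / α * E t) :
    (∀ x > (0:ℝ), v T x = x ^ α / α) ∧
    ∀ t ∈ Icc (0:ℝ) T, ∀ x > (0:ℝ),
      HasDerivWithinAt (fun s => v s x)
        (-(x ^ α / α * E t * (α/(2*(1-α))) * (θ t)^2)) (Icc 0 T) t ∧
      HasDerivAt (fun y : ℝ => v t y) (x ^ (α-1) * E t) x ∧
      HasDerivAt (fun y : ℝ => y ^ (α-1) * E t) ((α-1) * x ^ (α-2) * E t) x ∧
      IsGreatest (Set.range fun π : ℝ =>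
          (x ^ (α-1) * E t) * π * θ t + 1/2 * ((α-1) * x ^ (α-2) * E t) * π^2)
        ((x ^ (α-1) * E t) * (x * θ t/(1-α)) * θ t
          + 1/2 * ((α-1) * x ^ (α-2) * E t) * (x * θ t/(1-α))^2) ∧
      -(x ^ α / α * E t * (α/(2*(1-α))) * (θ t)^2)
        + ((x ^ (α-1) * E t) * (x * θ t/(1-α)) * θ t
          + 1/2 * ((α-1) * x ^ (α-2) * E t) * (x * θ t/(1-α))^2) = 0 :=
  stmt_19_general α T hα θ hθ E hE v hv
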